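/- arXiv:1110.1811 — 3 statements merged into one kernel-verified Lean document; each statement's English description precedes it below -/
import Mathlib

section
/- In a Boolean algebra, if u ≤ m ≤ w, then med(u, v, w) = m if and only if m ∧ uᶜ ≤ v and v ≤ m ∨ wᶜ, where med(a,b,c) = (a ∧ b) ∨ (b ∧ c) ∨ (c ∧ a). -/
def med {B : Type*} [Lattice B] (a b c : B) : B := (a ⊓ b) ⊔ (b ⊓ c) ⊔ (c ⊓ a)

theorem stmt_2 {B : Type*} [BooleanAlgebra B] (u m w v : B) (hum : u ≤ m) (hmw : m ≤ w) :
    med u v w = m ↔ m ⊓ uᶜ ≤ v ∧ v ≤ m ⊔ wᶜ := by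
  have huw : u ≤ w := hum.trans hmw
  have hmed : med u v w = u ⊔ (v ⊓ w) := by
    unfold med
    rw [inf_comm w u, inf_of_le_left huw]
    apply le_antisymm
    · exact sup_le (sup_le (inf_le_left.trans le_sup_left) le_sup_right) le_sup_left
    · exact sup_le le_sup_right (le_sup_right.trans le_sup_left)
  rw [hmed]
  constructor
  · rintro rfl
    constructor
    · calc (u ⊔ v ⊓ w) ⊓ uᶜ ≤ (u ⊔ v) ⊓ uᶜ := by
            gcongr; exact inf_le_left
        _ ≤ v := by
            rw [inf_sup_right, inf_compl_eq_bot, bot_sup_eq]; exact inf_le_left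
    · calc v = v ⊓ (w ⊔ wᶜ) := by rw [sup_compl_eq_top, inf_top_eq]
        _ = v ⊓ w ⊔ v ⊓ wᶜ := inf_sup_left v w wᶜ
        _ ≤ (u ⊔ v ⊓ w) ⊔ wᶜ := by
            gcongr
            exacts [le_sup_right, inf_le_right]
  · rintro ⟨h1, h2⟩
    apply le_antisymm
    · refine sup_le hum ?_
      calc v ⊓ w ≤ (m ⊔ wᶜ) ⊓ w := by gcongr
        _ = m ⊓ w := by rw [inf_sup_right, compl_inf_eq_bot, sup_bot_eq]
        _ ≤ m := inf_le_left
    · calc m = m ⊓ (u ⊔ uᶜ) := by rw [sup_compl_eq_top, inf_top_eq]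
        _ = m ⊓ u ⊔ m ⊓ uᶜ := inf_sup_left m u uᶜ
        _ ≤ u ⊔ v ⊓ w := sup_le_sup inf_le_right (le_inf h1 (inf_le_left.trans hmw))
end

section
/- Let Y be a finite distributive lattice and p : Y^n → Y a lattice polynomial function (an element of the clone generated by the lattice operations ∧, ∨, projections, and constants). Then p satisfies Goodstein's disjunctive normal form: p(y₁,…,yₙ) = ⋁_{I ⊆ [n]} ( p(1_I) ∧ ⋀_{i∈I} y_i ), where 1_I is the n-tuple with i-th component 1 if i ∈ I and 0 otherwise. -/
inductive IsLatticePoly (Y : Type*) [Lattice Y] (n : ℕ) : ((Fin n → Y) → Y) → Prop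
  | proj (i : Fin n) : IsLatticePoly Y n (fun y => y i)
  | const (c : Y) : IsLatticePoly Y n (fun _ => c)
  | sup {p q : (Fin n → Y) → Y} : IsLatticePoly Y n p → IsLatticePoly Y n q →
      IsLatticePoly Y n (fun y => p y ⊔ q y)
  | inf {p q : (Fin n → Y) → Y} : IsLatticePoly Y n p → IsLatticePoly Y n q →
      IsLatticePoly Y n (fun y => p y ⊓ q y)

lemma isLatticePoly_mono {Y : Type*} [Lattice Y] {n : ℕ} {p : (Fin n → Y) → Y}
    (hp : IsLatticePoly Y n p) : Monotone p := by
  induction hp with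
  | proj i => exact fun a b h => h i
  | const c => exact monotone_const
  | sup _ _ ihp ihq => exact fun a b h => sup_le_sup (ihp h) (ihq h)
  | inf _ _ ihp ihq => exact fun a b h => inf_le_inf (ihp h) (ihq h)

lemma isLatticePoly_key {Y : Type*} [DistribLattice Y] [BoundedOrder Y] {n : ℕ}
    {p : (Fin n → Y) → Y} (hp : IsLatticePoly Y n p) (I : Finset (Fin n)) (y : Fin n → Y) :
    p (fun i => if i ∈ I then (⊤ : Y) else ⊥) ⊓ I.inf y ≤ p y := by
  have h1 : p (fun i => if i ∈ I then (⊤ : Y) else ⊥) ⊓ I.inf y ≤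
      p (fun i => if i ∈ I then I.inf y else ⊥) := by
    induction hp with
    | proj i => by_cases h : i ∈ I <;> simp [h]
    | const c => exact inf_le_left
    | sup hp hq ihp ihq =>
        dsimp only
        rw [inf_sup_right]
        exact sup_le_sup ihp ihq
    | inf hp hq ihp ihq =>
        dsimp only
        exact le_inf (le_trans (inf_le_inf_right _ inf_le_left) ihp)
          (le_trans (inf_le_inf_right _ inf_le_right) ihq)
  refine h1.trans (isLatticePoly_mono hp fun i => ?_)
  by_cases h : i ∈ I
  · simp [h, Finset.inf_le h]
  · simp [h]

theorem stmt_9 {Y : Type*} [Fintype Y] [DistribLattice Y] [BoundedOrder Y] {n : ℕ}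
    (p : (Fin n → Y) → Y) (hp : IsLatticePoly Y n p) (y : Fin n → Y) :
    p y = (Finset.univ : Finset (Finset (Fin n))).sup
      (fun I => p (fun i => if i ∈ I then (⊤ : Y) else ⊥) ⊓ I.inf y) := by
  refine le_antisymm ?_ (Finset.sup_le fun I _ => isLatticePoly_key hp I y)
  induction hp with
  | proj i =>
      refine le_trans ?_ (Finset.le_sup (Finset.mem_univ ({i} : Finset (Fin n))))
      simp
  | const c =>
      refine le_trans ?_ (Finset.le_sup (Finset.mem_univ (∅ : Finset (Fin n))))
      simp
  | @sup p q hp hq ihp ihq =>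
      dsimp only
      refine sup_le (le_trans ihp ?_) (le_trans ihq ?_) <;>
        refine Finset.sup_le fun I _ => le_trans ?_ (Finset.le_sup (Finset.mem_univ I)) <;>
        exact inf_le_inf_right _ (by simp)
  | @inf p q hp hq ihp ihq =>
      dsimp only
      refine le_trans (inf_le_inf ihp ihq) ?_
      rw [Finset.sup_inf_distrib_right]
      refine Finset.sup_le fun I _ => ?_
      rw [Finset.sup_inf_distrib_left]
      refine Finset.sup_le fun J _ => ?_
      refine le_trans ?_ (Finset.le_sup (Finset.mem_univ (I ∪ J)))
      have hmp : p (fun i => if i ∈ I then (⊤ : Y) else ⊥) ≤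
          p (fun i => if i ∈ I ∪ J then (⊤ : Y) else ⊥) := by
        refine isLatticePoly_mono hp fun i => ?_
        by_cases h : i ∈ I <;> simp [h]
      have hmq : q (fun i => if i ∈ J then (⊤ : Y) else ⊥) ≤
          q (fun i => if i ∈ I ∪ J then (⊤ : Y) else ⊥) := by
        refine isLatticePoly_mono hq fun i => ?_
        by_cases h : i ∈ J <;> simp [h]
      rw [Finset.inf_union]
      exact le_inf (le_inf (le_trans (le_trans inf_le_left inf_le_left) hmp)
          (le_trans (le_trans inf_le_right inf_le_left) hmq))
        (inf_le_inf inf_le_right inf_le_right)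
end

section
/- Let Y be a finite distributive lattice realized as a sublattice of a finite powerset, X₁,…,Xₙ finite sets with distinguished elements 0,1, and f : ∏ X_i → Y. Then f factorizes as f(x) = p(φ₁(x₁),…,φₙ(xₙ)) for some lattice polynomial function p : Y^n → Y and maps φ_k : X_k → Y satisfying the boundary condition φ_k(0) ≤ φ_k(a) ≤ φ_k(1), if and only if f satisfies the boundary condition f(x_k^0) ≤ f(x) ≤ f(x_k^1) for all k, x, and Φ_k^- ≤ Φ_k^+ for all k, where Φ_k^-(a) = ⋁_{x_k=a} cl( f(x) ∧ f(x_k^0)ᶜ ) and Φ_k^+(a) = ⋀_{x_k=a} int( f(x) ∨ f(x_k^1)ᶜ ). -/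
/-!
For a lattice polynomial `p` and tuples `y, y'` that differ only at `k`, distributivity gives
`p y' ⊆ p y ∪ y' k` and `y k ∩ p y' ⊆ p y`. Applied to a factorization `f x = p (φ ∘ x)` these give
`cl (f x \ f (x_k^0)) ⊆ φ_k a ⊆ int (f z ∪ (f (z_k^1))ᶜ)` whenever `x_k = z_k = a`, hence `Φ⁻ ⊆ Φ⁺`;
the boundary condition on `f` is monotonicity of `p`.

Conversely take `φ = Φ⁻` and `p y = ⋃_S f(e_S) ∩ ⋂_{k ∈ S} y_k`, where the corner `e_S` is `x1` on
`S` and `x0` off `S`. If `u ∈ f x` and `S = {k | u ∈ Φ⁻_k(x_k)}`, then `u` survives lowering the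
coordinates outside `S` to `x0` (otherwise `u ∈ Φ⁻_k(x_k)`) and raising those in `S` to `x1`, so
`u ∈ f(e_S)`. Conversely, from `u ∈ f(e_S)` the coordinates outside `S` can be raised back to `x`,
and on `S` the inclusion `Φ⁻ ⊆ Φ⁺` lets each coordinate come back down from `x1` to `x_k`.
-/

/-- Lattice polynomial functions over the sublattice `Y` of a powerset:
built from projections and constants taken from `Y`, using `∩` and `∪`. -/
inductive IsPolyIn {U : Type*} (Y : Set (Set U)) (n : ℕ) :
    ((Fin n → Set U) → Set U) → Prop
  | proj (i : Fin n) : IsPolyIn Y n (fun y => y i)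
  | const (c : Set U) (hc : c ∈ Y) : IsPolyIn Y n (fun _ => c)
  | sup {p q : (Fin n → Set U) → Set U} : IsPolyIn Y n p → IsPolyIn Y n q →
      IsPolyIn Y n (fun y => p y ∪ q y)
  | inf {p q : (Fin n → Set U) → Set U} : IsPolyIn Y n p → IsPolyIn Y n q →
      IsPolyIn Y n (fun y => p y ∩ q y)

open Function

namespace IsPolyIn

variable {U : Type*} {Y : Set (Set U)} {n : ℕ} {p : (Fin n → Set U) → Set U}

theorem mono (hp : IsPolyIn Y n p) {y y' : Fin n → Set U} (h : ∀ i, y i ⊆ y' i) :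
    p y ⊆ p y' := by
  induction hp with
  | proj i => exact h i
  | const c hc => exact subset_rfl
  | sup _ _ ihp ihq => exact Set.union_subset_union ihp ihq
  | inf _ _ ihp ihq => exact Set.inter_subset_inter ihp ihq

theorem subset_union_apply (hp : IsPolyIn Y n p) {k : Fin n} {y y' : Fin n → Set U}
    (h : ∀ i ≠ k, y i = y' i) : p y' ⊆ p y ∪ y' k := by
  induction hp with
  | proj i =>
    by_cases hik : i = k
    · subst hik; exact Set.subset_union_right
    · show y' i ⊆ y i ∪ y' k
      exact h i hik ▸ Set.subset_union_left
  | const c hc => exact Set.subset_union_left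
  | sup _ _ ihp ihq =>
    exact Set.union_subset (ihp.trans (Set.union_subset_union_left _ Set.subset_union_left))
      (ihq.trans (Set.union_subset_union_left _ Set.subset_union_right))
  | inf _ _ ihp ihq =>
    rw [Set.union_comm, Set.union_inter_distrib_left]
    exact Set.inter_subset_inter (by rwa [Set.union_comm]) (by rwa [Set.union_comm])

theorem apply_inter_subset (hp : IsPolyIn Y n p) {k : Fin n} {y y' : Fin n → Set U}
    (h : ∀ i ≠ k, y i = y' i) : y k ∩ p y' ⊆ p y := by
  induction hp with
  | proj i =>
    by_cases hik : i = k
    · subst hik; exact Set.inter_subset_left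
    · show y k ∩ y' i ⊆ y i
      exact h i hik ▸ Set.inter_subset_right
  | const c hc => exact Set.inter_subset_right
  | sup _ _ ihp ihq =>
    rw [Set.inter_union_distrib_left]
    exact Set.union_subset_union ihp ihq
  | inf _ _ ihp ihq =>
    exact Set.subset_inter
      ((Set.inter_subset_inter_right _ Set.inter_subset_left).trans ihp)
      ((Set.inter_subset_inter_right _ Set.inter_subset_right).trans ihq)

theorem biUnion (h0 : ∅ ∈ Y) {ι : Type*} (s : Finset ι) {g : ι → (Fin n → Set U) → Set U}
    (hg : ∀ i ∈ s, IsPolyIn Y n (g i)) : IsPolyIn Y n (fun y => ⋃ i ∈ s, g i y) := by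
  classical
  induction s using Finset.induction_on with
  | empty => simpa using const ∅ h0
  | insert a s _ ih =>
    simp only [Finset.set_biUnion_insert]
    exact sup (hg a (s.mem_insert_self a)) (ih fun i hi => hg i (Finset.mem_insert_of_mem hi))

theorem biInter (h1 : Set.univ ∈ Y) {ι : Type*} (s : Finset ι) {g : ι → (Fin n → Set U) → Set U}
    (hg : ∀ i ∈ s, IsPolyIn Y n (g i)) : IsPolyIn Y n (fun y => ⋂ i ∈ s, g i y) := by
  classical
  induction s using Finset.induction_on with
  | empty => simpa using const Set.univ h1
  | insert a s _ ih =>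
    simp only [Finset.set_biInter_insert]
    exact inf (hg a (s.mem_insert_self a)) (ih fun i hi => hg i (Finset.mem_insert_of_mem hi))

theorem iUnion (h0 : ∅ ∈ Y) {ι : Type*} [Fintype ι] {g : ι → (Fin n → Set U) → Set U}
    (hg : ∀ i, IsPolyIn Y n (g i)) : IsPolyIn Y n (fun y => ⋃ i, g i y) := by
  simpa using biUnion h0 Finset.univ fun i _ => hg i

theorem comp_mono {X : Fin n → Type*} (hp : IsPolyIn Y n p) (φ : ∀ k, X k → Set U)
    {x z : ∀ i, X i} {k : Fin n} (h : ∀ i ≠ k, x i = z i) (hk : φ k (x k) ⊆ φ k (z k)) :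
    p (fun i => φ i (x i)) ⊆ p (fun i => φ i (z i)) :=
  hp.mono fun i => if hi : i = k then hi ▸ hk else h i hi ▸ subset_rfl

end IsPolyIn

section FiniteSublattice

variable {U : Type*} [Finite U] {Y : Set (Set U)}

theorem sInter_mem_of_inter_mem (h1 : Set.univ ∈ Y) (hcap : ∀ a ∈ Y, ∀ b ∈ Y, a ∩ b ∈ Y)
    {T : Set (Set U)} (hT : T ⊆ Y) : ⋂₀ T ∈ Y := by
  induction T, T.toFinite using Set.Finite.induction_on with
  | empty => simpa using h1
  | @insert a s _ _ ih =>
    rw [Set.sInter_insert]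
    exact hcap a (hT (s.mem_insert a)) _ (ih ((s.subset_insert a).trans hT))

theorem sUnion_mem_of_union_mem (h0 : ∅ ∈ Y) (hcup : ∀ a ∈ Y, ∀ b ∈ Y, a ∪ b ∈ Y)
    {T : Set (Set U)} (hT : T ⊆ Y) : ⋃₀ T ∈ Y := by
  induction T, T.toFinite using Set.Finite.induction_on with
  | empty => simpa using h0
  | @insert a s _ _ ih =>
    rw [Set.sUnion_insert]
    exact hcup a (hT (s.mem_insert a)) _ (ih ((s.subset_insert a).trans hT))

theorem biUnion_mem_of_union_mem (h0 : ∅ ∈ Y) (hcup : ∀ a ∈ Y, ∀ b ∈ Y, a ∪ b ∈ Y)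
    {ι : Type*} {s : Set ι} {g : ι → Set U} (hg : ∀ i ∈ s, g i ∈ Y) : ⋃ i ∈ s, g i ∈ Y := by
  rw [← Set.sUnion_image]
  exact sUnion_mem_of_union_mem h0 hcup (Set.image_subset_iff.2 hg)

end FiniteSublattice

section ClosureInterior

variable {U : Type*} {Y : Set (Set U)} {cl int : Set U → Set U}

theorem subset_cl (hcl : ∀ S, cl S = ⋂₀ {y | y ∈ Y ∧ S ⊆ y}) (S : Set U) : S ⊆ cl S :=
  hcl S ▸ Set.subset_sInter fun _ hy => hy.2

theorem cl_subset (hcl : ∀ S, cl S = ⋂₀ {y | y ∈ Y ∧ S ⊆ y}) {S W : Set U} (hW : W ∈ Y)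
    (h : S ⊆ W) : cl S ⊆ W :=
  hcl S ▸ Set.sInter_subset_of_mem ⟨hW, h⟩

theorem cl_mem [Finite U] (h1 : Set.univ ∈ Y) (hcap : ∀ a ∈ Y, ∀ b ∈ Y, a ∩ b ∈ Y)
    (hcl : ∀ S, cl S = ⋂₀ {y | y ∈ Y ∧ S ⊆ y}) (S : Set U) : cl S ∈ Y :=
  hcl S ▸ sInter_mem_of_inter_mem h1 hcap fun _ hy => hy.1

theorem cl_mono [Finite U] (h1 : Set.univ ∈ Y) (hcap : ∀ a ∈ Y, ∀ b ∈ Y, a ∩ b ∈ Y)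
    (hcl : ∀ S, cl S = ⋂₀ {y | y ∈ Y ∧ S ⊆ y}) {S T : Set U} (h : S ⊆ T) : cl S ⊆ cl T :=
  cl_subset hcl (cl_mem h1 hcap hcl T) (h.trans (subset_cl hcl T))

theorem int_subset (hint : ∀ S, int S = ⋃₀ {y | y ∈ Y ∧ y ⊆ S}) (S : Set U) : int S ⊆ S :=
  hint S ▸ Set.sUnion_subset fun _ hy => hy.2

theorem subset_int (hint : ∀ S, int S = ⋃₀ {y | y ∈ Y ∧ y ⊆ S}) {S W : Set U} (hW : W ∈ Y)
    (h : W ⊆ S) : W ⊆ int S :=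
  hint S ▸ Set.subset_sUnion_of_mem ⟨hW, h⟩

end ClosureInterior

namespace Finset

variable {ι : Type*} [DecidableEq ι] {X : ι → Type*} {P : (∀ i, X i) → Prop}

theorem pred_piecewise_of_update (T : Finset ι) {g x : ∀ i, X i}
    (step : ∀ w, ∀ k ∈ T, w k = x k → P w → P (update w k (g k))) (hx : P x) :
    P (T.piecewise g x) := by
  induction T using Finset.induction_on with
  | empty => simpa using hx
  | insert a T ha ih =>
    rw [piecewise_insert]
    exact step _ a (T.mem_insert_self a) (T.piecewise_eq_of_notMem _ _ ha)
      (ih fun w k hk => step w k (mem_insert_of_mem hk))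

theorem pred_of_piecewise_of_update (T : Finset ι) {g x : ∀ i, X i}
    (step : ∀ w, ∀ k ∈ T, w k = x k → P (update w k (g k)) → P w) (h : P (T.piecewise g x)) :
    P x := by
  by_contra hx
  exact pred_piecewise_of_update (P := fun w => ¬ P w) T
    (fun w k hk hwk => mt (step w k hk hwk)) hx h

end Finset

section Factorization

variable {U : Type*} {n : ℕ} {X : Fin n → Type*}

def lowerPhi (cl : Set U → Set U) (f : (∀ k, X k) → Set U) (x0 : ∀ k, X k) (k : Fin n)
    (a : X k) : Set U :=
  ⋃ x ∈ {x : ∀ i, X i | x k = a}, cl (f x ∩ (f (update x k (x0 k)))ᶜ)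

def upperPhi (int : Set U → Set U) (f : (∀ k, X k) → Set U) (x1 : ∀ k, X k) (k : Fin n)
    (a : X k) : Set U :=
  ⋂ x ∈ {x : ∀ i, X i | x k = a}, int (f x ∪ (f (update x k (x1 k)))ᶜ)

def cornerPoly (f : (∀ k, X k) → Set U) (x0 x1 : ∀ k, X k) (y : Fin n → Set U) : Set U :=
  ⋃ S : Finset (Fin n), f (S.piecewise x1 x0) ∩ ⋂ k ∈ S, y k

variable {Y : Set (Set U)} {cl int : Set U → Set U} {f : (∀ k, X k) → Set U} {x0 x1 : ∀ k, X k}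

theorem lowerPhi_subset_upperPhi_of_isPolyIn {p : (Fin n → Set U) → Set U}
    (hcl : ∀ S, cl S = ⋂₀ {y | y ∈ Y ∧ S ⊆ y}) (hint : ∀ S, int S = ⋃₀ {y | y ∈ Y ∧ y ⊆ S})
    (hp : IsPolyIn Y n p) {φ : ∀ k, X k → Set U} (hφY : ∀ k a, φ k a ∈ Y) (k : Fin n) (a : X k) :
    lowerPhi cl (fun x => p fun i => φ i (x i)) x0 k a ⊆
      upperPhi int (fun x => p fun i => φ i (x i)) x1 k a := by
  refine Set.iUnion₂_subset fun x (hx : x k = a) => Set.subset_iInter₂ fun z (hz : z k = a) => ?_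
  refine (cl_subset hcl (hφY k a) ?_).trans (subset_int hint (hφY k a) ?_)
  · rw [← hx]
    exact Set.sdiff_subset_iff.2 (hp.subset_union_apply fun i hi => by rw [update_of_ne hi])
  · rw [← hz]
    exact Set.subset_union_compl_iff_inter_subset.2 (hp.apply_inter_subset
      (y := fun i => φ i (z i)) fun i hi => by rw [update_of_ne hi])

theorem lowerPhi_mem [Finite U] (h0 : ∅ ∈ Y) (h1 : Set.univ ∈ Y)
    (hcup : ∀ a ∈ Y, ∀ b ∈ Y, a ∪ b ∈ Y) (hcap : ∀ a ∈ Y, ∀ b ∈ Y, a ∩ b ∈ Y)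
    (hcl : ∀ S, cl S = ⋂₀ {y | y ∈ Y ∧ S ⊆ y}) (k : Fin n) (a : X k) :
    lowerPhi cl f x0 k a ∈ Y :=
  biUnion_mem_of_union_mem h0 hcup fun _ _ => cl_mem h1 hcap hcl _

theorem lowerPhi_self_eq_empty (h0 : ∅ ∈ Y) (hcl : ∀ S, cl S = ⋂₀ {y | y ∈ Y ∧ S ⊆ y})
    (k : Fin n) : lowerPhi cl f x0 k (x0 k) = ∅ := by
  refine Set.subset_empty_iff.1 (Set.iUnion₂_subset fun x (hx : x k = x0 k) => ?_)
  rw [← hx, update_eq_self, Set.inter_compl_self]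
  exact cl_subset hcl h0 subset_rfl

theorem lowerPhi_subset_lowerPhi_x1 [Finite U] (h1 : Set.univ ∈ Y)
    (hcap : ∀ a ∈ Y, ∀ b ∈ Y, a ∩ b ∈ Y) (hcl : ∀ S, cl S = ⋂₀ {y | y ∈ Y ∧ S ⊆ y})
    (hf : ∀ x k, f x ⊆ f (update x k (x1 k))) (k : Fin n) (a : X k) :
    lowerPhi cl f x0 k a ⊆ lowerPhi cl f x0 k (x1 k) := by
  refine Set.iUnion₂_subset fun x _ => ?_
  refine .trans ?_ (Set.subset_biUnion_of_mem (x := update x k (x1 k)) (update_self k _ x))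
  rw [update_idem]
  exact cl_mono h1 hcap hcl (Set.inter_subset_inter_left _ (hf x k))

theorem isPolyIn_cornerPoly (h0 : ∅ ∈ Y) (h1 : Set.univ ∈ Y) (hfY : ∀ x, f x ∈ Y) :
    IsPolyIn Y n (cornerPoly f x0 x1) :=
  IsPolyIn.iUnion h0 fun S => .inf (.const _ (hfY _)) (.biInter h1 S fun k _ => .proj k)

theorem subset_cornerPoly (hcl : ∀ S, cl S = ⋂₀ {y | y ∈ Y ∧ S ⊆ y})
    (hf : ∀ x k, f x ⊆ f (update x k (x1 k))) (x : ∀ k, X k) :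
    f x ⊆ cornerPoly f x0 x1 fun i => lowerPhi cl f x0 i (x i) := by
  classical
  intro u hu
  let S := Finset.univ.filter fun k => u ∈ lowerPhi cl f x0 k (x k)
  refine Set.mem_iUnion.2 ⟨S, ?_, Set.mem_iInter₂.2 fun k hk => (Finset.mem_filter.1 hk).2⟩
  have lowered : u ∈ f (Sᶜ.piecewise x0 x) := by
    refine Sᶜ.pred_piecewise_of_update (P := (u ∈ f ·)) (fun w k hk hwk hw => ?_) hu
    by_contra hw0
    refine Finset.mem_compl.1 hk (Finset.mem_filter.2 ⟨Finset.mem_univ k, ?_⟩)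
    rw [← hwk]
    exact Set.mem_biUnion rfl (subset_cl hcl _ ⟨hw, hw0⟩)
  have raised := S.pred_piecewise_of_update (P := (u ∈ f ·)) (fun w k _ _ hw => hf w k hw) lowered
  rwa [Finset.piecewise_compl, Finset.piecewise_idem_right] at raised

theorem cornerPoly_subset (hint : ∀ S, int S = ⋃₀ {y | y ∈ Y ∧ y ⊆ S})
    (hf : ∀ x k, f (update x k (x0 k)) ⊆ f x)
    (hsub : ∀ k a, lowerPhi cl f x0 k a ⊆ upperPhi int f x1 k a) (x : ∀ k, X k) :
    (cornerPoly f x0 x1 fun i => lowerPhi cl f x0 i (x i)) ⊆ f x := by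
  intro u hu
  obtain ⟨S, hcorner, hΦ⟩ := Set.mem_iUnion.1 hu
  have raised : u ∈ f (S.piecewise x1 x) := by
    refine Sᶜ.pred_of_piecewise_of_update (P := (u ∈ f ·)) (g := x0)
      (fun w k _ _ hw => hf w k hw) ?_
    rwa [Finset.piecewise_compl, Finset.piecewise_idem_left]
  refine S.pred_of_piecewise_of_update (P := (u ∈ f ·)) (fun w k hk hwk hw1 => ?_) raised
  have hup := hsub k (x k) (Set.mem_iInter₂.1 hΦ k hk)
  exact (int_subset hint _ (Set.mem_iInter₂.1 hup w hwk)).resolve_right (not_not.2 hw1)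

end Factorization

theorem stmt_19_general {U : Type*} [Fintype U] (Y : Set (Set U))
    (h0 : ∅ ∈ Y) (h1 : Set.univ ∈ Y)
    (hcup : ∀ a ∈ Y, ∀ b ∈ Y, a ∪ b ∈ Y) (hcap : ∀ a ∈ Y, ∀ b ∈ Y, a ∩ b ∈ Y)
    (cl int : Set U → Set U)
    (hcl : ∀ S, cl S = ⋂₀ {y | y ∈ Y ∧ S ⊆ y})
    (hint : ∀ S, int S = ⋃₀ {y | y ∈ Y ∧ y ⊆ S})
    {n : ℕ} (X : Fin n → Type*)
    (x0 x1 : ∀ k, X k)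
    (f : (∀ k, X k) → Set U) (hfY : ∀ x, f x ∈ Y)
    (Φm Φp : ∀ k : Fin n, X k → Set U)
    (hΦm : ∀ k a, Φm k a = ⋃ x ∈ {x : ∀ i, X i | x k = a},
      cl (f x ∩ (f (Function.update x k (x0 k)))ᶜ))
    (hΦp : ∀ k a, Φp k a = ⋂ x ∈ {x : ∀ i, X i | x k = a},
      int (f x ∪ (f (Function.update x k (x1 k)))ᶜ)) :
    (∃ (p : (Fin n → Set U) → Set U) (φ : ∀ k : Fin n, X k → Set U),
        IsPolyIn Y n p ∧ (∀ k a, φ k a ∈ Y) ∧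
        (∀ k (a : X k), φ k (x0 k) ⊆ φ k a ∧ φ k a ⊆ φ k (x1 k)) ∧
        ∀ x : ∀ k, X k, f x = p (fun i => φ i (x i)))
    ↔ ((∀ (x : ∀ k, X k) (k : Fin n),
          f (Function.update x k (x0 k)) ⊆ f x ∧ f x ⊆ f (Function.update x k (x1 k))) ∧
        ∀ k a, Φm k a ⊆ Φp k a) := by
  obtain rfl : Φm = lowerPhi cl f x0 := funext fun k => funext (hΦm k)
  obtain rfl : Φp = upperPhi int f x1 := funext fun k => funext (hΦp k)
  constructor
  · rintro ⟨p, φ, hp, hφY, hφ, hf⟩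
    obtain rfl : f = fun x => p fun i => φ i (x i) := funext hf
    refine ⟨fun x k => ⟨?_, ?_⟩, lowerPhi_subset_upperPhi_of_isPolyIn hcl hint hp hφY⟩
    · exact hp.comp_mono φ (fun i hi => update_of_ne hi _ _) (by simpa using (hφ k (x k)).1)
    · exact hp.comp_mono φ (fun i hi => (update_of_ne hi _ _).symm) (by simpa using (hφ k (x k)).2)
  · rintro ⟨hf, hsub⟩
    refine ⟨cornerPoly f x0 x1, lowerPhi cl f x0, isPolyIn_cornerPoly h0 h1 hfY,
      lowerPhi_mem h0 h1 hcup hcap hcl, fun k a => ⟨?_, ?_⟩, fun x => ?_⟩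
    · simp [lowerPhi_self_eq_empty h0 hcl]
    · exact lowerPhi_subset_lowerPhi_x1 h1 hcap hcl (fun x k => (hf x k).2) k a
    · exact (subset_cornerPoly hcl (fun x k => (hf x k).2) x).antisymm
        (cornerPoly_subset hint (fun x k => (hf x k).1) hsub x)

theorem stmt_19 {U : Type*} [Fintype U] (Y : Set (Set U))
    (h0 : ∅ ∈ Y) (h1 : Set.univ ∈ Y)
    (hcup : ∀ a ∈ Y, ∀ b ∈ Y, a ∪ b ∈ Y) (hcap : ∀ a ∈ Y, ∀ b ∈ Y, a ∩ b ∈ Y)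
    (cl int : Set U → Set U)
    (hcl : ∀ S, cl S = ⋂₀ {y | y ∈ Y ∧ S ⊆ y})
    (hint : ∀ S, int S = ⋃₀ {y | y ∈ Y ∧ y ⊆ S})
    {n : ℕ} (X : Fin n → Type*) [∀ k, Fintype (X k)]
    (x0 x1 : ∀ k, X k) (hx : ∀ k, x0 k ≠ x1 k)
    (f : (∀ k, X k) → Set U) (hfY : ∀ x, f x ∈ Y)
    (Φm Φp : ∀ k : Fin n, X k → Set U)
    (hΦm : ∀ k a, Φm k a = ⋃ x ∈ {x : ∀ i, X i | x k = a},
      cl (f x ∩ (f (Function.update x k (x0 k)))ᶜ))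
    (hΦp : ∀ k a, Φp k a = ⋂ x ∈ {x : ∀ i, X i | x k = a},
      int (f x ∪ (f (Function.update x k (x1 k)))ᶜ)) :
    (∃ (p : (Fin n → Set U) → Set U) (φ : ∀ k : Fin n, X k → Set U),
        IsPolyIn Y n p ∧ (∀ k a, φ k a ∈ Y) ∧
        (∀ k (a : X k), φ k (x0 k) ⊆ φ k a ∧ φ k a ⊆ φ k (x1 k)) ∧
        ∀ x : ∀ k, X k, f x = p (fun i => φ i (x i)))
    ↔ ((∀ (x : ∀ k, X k) (k : Fin n),
          f (Function.update x k (x0 k)) ⊆ f x ∧ f x ⊆ f (Function.update x k (x1 k))) ∧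
        ∀ k a, Φm k a ⊆ Φp k a) :=
  stmt_19_general Y h0 h1 hcup hcap cl int hcl hint X x0 x1 f hfY Φm Φp hΦm hΦp
end
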